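/- Under the assumptions of the 2-matrix model (W polynomial of degree 4, suitable integrability, τ ≠ 0), a monic polynomial p of degree k satisfies the biorthogonality conditions ∬ p(x) q(y) e^{-V(x)-W(y)+2τxy} dx dy = 0 for all polynomials q of degree ≤ k-1 if and only if p satisfies the multiple orthogonality relations ∫ p(x) xⁱ wⱼ(x) dx = 0 for i = 0,…,nⱼ-1 and j = 0,1,2, where wⱼ(x) = ∫ yʲ e^{-V(x)-W(y)+2τxy} dy, n₀ = ⌊(k+2)/3⌋, n₁ = ⌊(k+1)/3⌋, n₂ = ⌊k/3⌋. -/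

import Mathlib

/-!
Write `⟨f, g⟩ = ∬ f(x) g(y) w(x, y) dx dy` for the weight `w = e^{-V(x) - W(y) + 2τxy}`.
Integrating by parts in `y` gives `2τ ⟨f·x, g⟩ = ⟨f, T g⟩` with `T g = W' g - g'`, hence
`(2τ)^i ⟨p·xⁱ, yʲ⟩ = ⟨p, Tⁱ yʲ⟩`. As `W'` has degree 3, `Tⁱ yʲ` has degree `3i + j`, so the
polynomials `Tⁱ yʲ` with `j ≤ 2` and `3i + j < k` form a triangular basis of the polynomials of
degree `< k`.
The integration by parts only needs the slices `y ↦ yᵇ w(x, y)` to be integrable for almost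
every `x`, which Fubini provides from the finite moments.
-/

open MeasureTheory Polynomial

noncomputable section

namespace TwoMatrixModel

section Algebra

variable {R : Type*} [CommRing R]

def mulXAdjoint (W g : R[X]) : R[X] := derivative W * g - derivative g

variable [IsDomain R] {W : R[X]}

lemma degree_mulXAdjoint (hW : derivative W ≠ 0) (g : R[X]) :
    (mulXAdjoint W g).degree = (derivative W).degree + g.degree := by
  rcases eq_or_ne g 0 with rfl | hg
  · simp [mulXAdjoint]
  rw [mulXAdjoint, degree_sub_eq_left_of_degree_lt, degree_mul]
  calc (derivative g).degree < g.degree := degree_derivative_lt hg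
    _ ≤ (derivative W * g).degree := by rw [mul_comm]; exact degree_le_mul_left g hW

lemma degree_iterate_mulXAdjoint {d : ℕ} (hW : (derivative W).degree = d) (g : R[X]) (i : ℕ) :
    ((mulXAdjoint W)^[i] g).degree = ↑(d * i) + g.degree := by
  have hW0 : derivative W ≠ 0 := fun h => by simp [h] at hW
  induction i with
  | zero => simp
  | succ i ih =>
    rw [Function.iterate_succ_apply', degree_mulXAdjoint hW0, ih, hW, ← add_assoc]
    norm_cast
    ring_nf

end Algebra

lemma span_image_iterate_mulXAdjoint_X_pow {K : Type*} [Field K] {W : K[X]} {d : ℕ}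
    (hW : (derivative W).degree = d) (k : ℕ) :
    Submodule.span K ((fun m => (mulXAdjoint W)^[m / d] (X ^ (m % d))) '' Set.Iio k) =
      degreeLT K k :=
  let S : Sequence K := ⟨fun m => (mulXAdjoint W)^[m / d] (X ^ (m % d)), fun m => by
    rw [degree_iterate_mulXAdjoint hW, degree_X_pow, ← Nat.cast_add, Nat.div_add_mod]⟩
  S.span_degreeLT fun i _ => (leadingCoeff_ne_zero.2 (S.ne_zero i)).isUnit

lemma integrable_eval_comp_mul {α : Type*} [MeasurableSpace α] {μ : Measure α} {u φ : α → ℝ}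
    (h : ∀ b : ℕ, Integrable (fun a => u a ^ b * φ a) μ) (g : ℝ[X]) :
    Integrable (fun a => g.eval (u a) * φ a) μ := by
  induction g using Polynomial.induction_on' with
  | add g₁ g₂ h₁ h₂ =>
    simp only [eval_add, add_mul]
    exact h₁.add h₂
  | monomial n c => simpa only [eval_monomial, mul_assoc] using (h n).const_mul c

def weight (V : ℝ → ℝ) (W : ℝ[X]) (τ x y : ℝ) : ℝ := Real.exp (-V x - W.eval y + 2 * τ * x * y)

def HasFiniteMoments (V : ℝ → ℝ) (W : ℝ[X]) (τ : ℝ) : Prop :=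
  ∀ a b : ℕ, Integrable fun z : ℝ × ℝ => |z.1| ^ a * |z.2| ^ b * weight V W τ z.1 z.2

def pairing (V : ℝ → ℝ) (W : ℝ[X]) (τ : ℝ) (f g : ℝ[X]) : ℝ :=
  ∫ z : ℝ × ℝ, f.eval z.1 * g.eval z.2 * weight V W τ z.1 z.2

variable {V : ℝ → ℝ} {W : ℝ[X]} {τ : ℝ}

lemma hasDerivAt_weight (x y : ℝ) :
    HasDerivAt (weight V W τ x) ((2 * τ * x - (derivative W).eval y) * weight V W τ x y) y := by
  have hexponent : HasDerivAt (fun y => -V x - W.eval y + 2 * τ * x * y)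
      (2 * τ * x - (derivative W).eval y) y :=
    (((W.hasDerivAt y).const_sub (-V x)).add ((hasDerivAt_id y).const_mul (2 * τ * x))).congr_deriv
      (by ring)
  exact hexponent.exp.congr_deriv (mul_comm _ _)

lemma integral_mulXAdjoint_mul_weight {x : ℝ}
    (hx : ∀ g : ℝ[X], Integrable fun y => g.eval y * weight V W τ x y) (g : ℝ[X]) :
    ∫ y, (mulXAdjoint W g).eval y * weight V W τ x y =
      2 * τ * x * ∫ y, g.eval y * weight V W τ x y := by
  set g' := derivative g + (C (2 * τ * x) - derivative W) * g
  have hderiv (y : ℝ) : HasDerivAt (fun y => g.eval y * weight V W τ x y)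
      (g'.eval y * weight V W τ x y) y :=
    ((g.hasDerivAt y).mul (hasDerivAt_weight x y)).congr_deriv <| by
      simp only [eval_add, eval_mul, eval_sub, eval_C, g']
      ring
  have hzero := integral_eq_zero_of_hasDerivAt_of_integrable hderiv (hx g') (hx g)
  calc ∫ y, (mulXAdjoint W g).eval y * weight V W τ x y
      = ∫ y, (2 * τ * x * (g.eval y * weight V W τ x y) - g'.eval y * weight V W τ x y) := by
        congr 1 with y
        simp only [mulXAdjoint, eval_sub, eval_mul, eval_add, eval_C, g']
        ring
    _ = 2 * τ * x * ∫ y, g.eval y * weight V W τ x y := by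
        rw [integral_sub ((hx g).const_mul _) (hx g'), hzero, integral_const_mul, sub_zero]

section Moments

variable (h : HasFiniteMoments V W τ)
include h

lemma integrable_pow_mul_pow_mul_weight (a b : ℕ) :
    Integrable fun z : ℝ × ℝ => z.1 ^ a * z.2 ^ b * weight V W τ z.1 z.2 := by
  have hw : AEStronglyMeasurable (fun z : ℝ × ℝ => weight V W τ z.1 z.2) :=
    by simpa using (h 0 0).aestronglyMeasurable
  refine (h a b).mono' (by fun_prop) (ae_of_all _ fun z => ?_)
  simp [weight]

lemma integrable_pairing (f g : ℝ[X]) :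
    Integrable fun z : ℝ × ℝ => f.eval z.1 * g.eval z.2 * weight V W τ z.1 z.2 := by
  have hf (b : ℕ) : Integrable fun z : ℝ × ℝ => f.eval z.1 * (z.2 ^ b * weight V W τ z.1 z.2) :=
    integrable_eval_comp_mul (fun a => by
      simpa only [mul_assoc] using integrable_pow_mul_pow_mul_weight h a b) f
  have hfg := integrable_eval_comp_mul (u := Prod.snd)
    (fun b => by simpa only [mul_left_comm] using hf b) g
  simpa only [mul_left_comm, mul_assoc, mul_comm] using hfg

lemma ae_integrable_slice :
    ∀ᵐ x, ∀ g : ℝ[X], Integrable fun y => g.eval y * weight V W τ x y := by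
  have hmoments : ∀ᵐ x, ∀ b : ℕ, Integrable fun y => y ^ b * weight V W τ x y := by
    refine ae_all_iff.2 fun b => ?_
    have hb := integrable_pow_mul_pow_mul_weight h 0 b
    rw [Measure.volume_eq_prod] at hb
    simpa using hb.prod_right_ae
  filter_upwards [hmoments] with x hx g using integrable_eval_comp_mul hx g

lemma pairing_eq_integral_integral (f g : ℝ[X]) :
    pairing V W τ f g = ∫ x, f.eval x * ∫ y, g.eval y * weight V W τ x y := by
  have hfg := integrable_pairing h f g
  rw [Measure.volume_eq_prod] at hfg
  rw [pairing, Measure.volume_eq_prod, integral_prod _ hfg]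
  congr 1 with x
  rw [← integral_const_mul]
  congr 1 with y
  ring

lemma two_mul_pairing_mul_X (f g : ℝ[X]) :
    2 * τ * pairing V W τ (f * X) g = pairing V W τ f (mulXAdjoint W g) := by
  rw [pairing_eq_integral_integral h, pairing_eq_integral_integral h, ← integral_const_mul]
  refine integral_congr_ae ?_
  filter_upwards [ae_integrable_slice h] with x hx
  rw [integral_mulXAdjoint_mul_weight hx, eval_mul, eval_X]
  ring

lemma two_mul_pow_mul_pairing_mul_X_pow (f g : ℝ[X]) (i : ℕ) :
    (2 * τ) ^ i * pairing V W τ (f * X ^ i) g = pairing V W τ f ((mulXAdjoint W)^[i] g) := by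
  induction i generalizing g with
  | zero => simp
  | succ i ih =>
    rw [pow_succ, pow_succ, mul_assoc, ← mul_assoc f, two_mul_pairing_mul_X h, ih,
      Function.iterate_succ_apply]

lemma pairing_eq_zero_of_mem_span {f : ℝ[X]} {s : Set ℝ[X]} (hs : ∀ g ∈ s, pairing V W τ f g = 0)
    {g : ℝ[X]} (hg : g ∈ Submodule.span ℝ s) : pairing V W τ f g = 0 := by
  induction hg using Submodule.span_induction with
  | mem g hg => exact hs g hg
  | zero => simp [pairing]
  | add g₁ g₂ _ _ h₁ h₂ =>
    simp only [pairing, eval_add, mul_add, add_mul] at h₁ h₂ ⊢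
    rw [integral_add (integrable_pairing h f g₁) (integrable_pairing h f g₂), h₁, h₂, add_zero]
  | smul c g _ hg =>
    simp only [pairing, eval_smul, smul_eq_mul, mul_left_comm _ c, mul_assoc c] at hg ⊢
    rw [integral_const_mul, hg, mul_zero]

end Moments

end TwoMatrixModel

end

open TwoMatrixModel

theorem biorthogonality_iff_multiple_orthogonality_general (V : ℝ → ℝ) (W : Polynomial ℝ)
    (hW : W.degree = 4) (τ : ℝ) (hτ : τ ≠ 0)
    (hint : ∀ a b : ℕ, Integrable (fun q : ℝ × ℝ =>
      |q.1| ^ a * |q.2| ^ b * Real.exp (-V q.1 - W.eval q.2 + 2 * τ * q.1 * q.2)))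
    (k : ℕ) (p : Polynomial ℝ) :
    (∀ q : Polynomial ℝ, q.degree < (k : WithBot ℕ) →
      ∫ z : ℝ × ℝ, p.eval z.1 * q.eval z.2 * Real.exp (-V z.1 - W.eval z.2 + 2 * τ * z.1 * z.2) = 0)
    ↔ (∀ j : ℕ, j ≤ 2 → ∀ i : ℕ, i < (k + 2 - j) / 3 →
      ∫ x : ℝ, p.eval x * x ^ i *
        (∫ y : ℝ, y ^ j * Real.exp (-V x - W.eval y + 2 * τ * x * y)) = 0) := by
  have hW' : (derivative W).degree = (3 : ℕ) := by
    rw [degree_derivative (by rw [natDegree_eq_of_degree_eq_some hW]; norm_num),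
      natDegree_eq_of_degree_eq_some hW]
  have hmoment (i j : ℕ) : pairing V W τ p ((mulXAdjoint W)^[i] (X ^ j)) = (2 * τ) ^ i *
      ∫ x : ℝ, p.eval x * x ^ i * (∫ y : ℝ, y ^ j * weight V W τ x y) := by
    rw [← two_mul_pow_mul_pairing_mul_X_pow hint, pairing_eq_integral_integral hint]
    simp only [eval_mul, eval_pow, eval_X]
  have h2τ (i : ℕ) : (2 * τ) ^ i ≠ 0 := pow_ne_zero i (mul_ne_zero two_ne_zero hτ)
  change (∀ q : ℝ[X], q.degree < k → pairing V W τ p q = 0) ↔ _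
  constructor
  · intro hbi j hj i hi
    refine (mul_eq_zero.1 ((hmoment i j).symm.trans (hbi _ ?_))).resolve_left (h2τ i)
    rw [degree_iterate_mulXAdjoint hW', degree_X_pow, ← Nat.cast_add, Nat.cast_lt]
    omega
  · intro hmo q hq
    rw [← mem_degreeLT, ← span_image_iterate_mulXAdjoint_X_pow hW'] at hq
    refine pairing_eq_zero_of_mem_span hint ?_ hq
    rintro _ ⟨m, hm, rfl⟩
    rw [hmoment]
    exact mul_eq_zero_of_right _ (hmo (m % 3) (by omega) (m / 3) (by rw [Set.mem_Iio] at hm; omega))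

theorem biorthogonality_iff_multiple_orthogonality (V : ℝ → ℝ) (W : Polynomial ℝ)
    (hW : W.degree = 4) (hlc : 0 < W.leadingCoeff) (τ : ℝ) (hτ : τ ≠ 0)
    (hint : ∀ a b : ℕ, Integrable (fun q : ℝ × ℝ =>
      |q.1| ^ a * |q.2| ^ b * Real.exp (-V q.1 - W.eval q.2 + 2 * τ * q.1 * q.2)))
    (k : ℕ) (p : Polynomial ℝ) (hmonic : p.Monic) (hdeg : p.natDegree = k) :
    (∀ q : Polynomial ℝ, q.degree < (k : WithBot ℕ) →
      ∫ z : ℝ × ℝ, p.eval z.1 * q.eval z.2 * Real.exp (-V z.1 - W.eval z.2 + 2 * τ * z.1 * z.2) = 0)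
    ↔ (∀ j : ℕ, j ≤ 2 → ∀ i : ℕ, i < (k + 2 - j) / 3 →
      ∫ x : ℝ, p.eval x * x ^ i *
        (∫ y : ℝ, y ^ j * Real.exp (-V x - W.eval y + 2 * τ * x * y)) = 0) :=
  biorthogonality_iff_multiple_orthogonality_general V W hW τ hτ hint k p
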